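/- arXiv:1208.2337 — 2 statements merged into one kernel-verified Lean document; each statement's English description precedes it below -/
import Mathlib

section
/- For every n ∈ ℕ, the number of real roots of the n-th Yablonskii–Vorob'ev polynomial Q_n equals ⌊(n+1)/2⌋. Moreover, for n ≥ 2, min(Z_{n-1}) > min(Z_{n+1}) and max(Z_{n-1}) < max(Z_{n+1}), where Z_m denotes the set of real roots of Q_m. -/
/-!
Write `Z n` for the set of real roots of `Q n`. At a root `b` of `Q (n+1)` the recurrence reads
`Q (n+2) b * Q n b = 4 * (Q (n+1))' b ^ 2 > 0`, so `Q n` and `Q (n+2)` have the same sign at `b`.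
A polynomial with positive leading coefficient and simple roots has sign
`(-1) ^ #{roots above x}` at `x`, and its number of real roots has the parity of its degree;
the degrees `n(n+1)/2` and `(n+2)(n+3)/2` have opposite parity.

By induction, `Z n` and `Z (n+1)` alternate, starting with a point of `Z (n+1)`. The sign
condition then puts an odd number of points of `Z (n+2)` below `min (Z (n+1))`, in every gap of
`Z (n+1)`, and above `max (Z (n+1))` exactly when `Z n` has a point there: at least `#Z n + 1`
points in all. As `Z n` separates `Z (n+2)`, there are at most `#Z n + 1`, so all these counts are
exact and `Z (n+1)`, `Z (n+2)` alternate in the same way. Finally `#Z (n+1) = #Z (n-1) + 1` and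
the separation of `Z (n+1)` by `Z (n-1)` push the extreme points of `Z (n+1)` beyond those of
`Z (n-1)`.
-/

open Polynomial

/-- The set of real roots of a real polynomial. -/
def realRoots (P : Polynomial ℝ) : Set ℝ := {x : ℝ | P.eval x = 0}

namespace Finset

section LinearOrder

variable {α : Type*} [LinearOrder α] {S A B C : Finset α} {x y : α}

def countBelow (S : Finset α) (x : α) : ℕ := #{s ∈ S | s < x}

def countAbove (S : Finset α) (x : α) : ℕ := #{s ∈ S | x < s}

theorem countBelow_mono (S : Finset α) : Monotone (countBelow S) :=
  fun _ _ hxy => card_le_card (monotone_filter_right S fun _ _ hs => hs.trans_le hxy)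

theorem countBelow_lt_countBelow (hx : x ∈ S) (hxy : x < y) : countBelow S x < countBelow S y :=
  card_lt_card <| (ssubset_iff_of_subset (monotone_filter_right S fun _ _ hs => hs.trans hxy)).2
    ⟨x, mem_filter.2 ⟨hx, hxy⟩, fun h => (mem_filter.1 h).2.false⟩

theorem countBelow_add_countAbove_of_notMem (hx : x ∉ S) :
    countBelow S x + countAbove S x = #S := by
  rw [countBelow, countAbove, ← card_filter_add_card_filter_not (s := S) (fun s => s < x)]
  congr 2
  refine filter_congr fun s hs => ?_
  rw [not_lt, le_iff_lt_or_eq, or_iff_left (ne_of_mem_of_not_mem hs hx).symm]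

theorem countBelow_add_countAbove_of_mem (hx : x ∈ S) :
    countBelow S x + countAbove S x + 1 = #S := by
  have h := countBelow_add_countAbove_of_notMem (notMem_erase x S)
  have hbelow : countBelow (S.erase x) x = countBelow S x := by
    rw [countBelow, countBelow, filter_erase, erase_eq_of_notMem (by simp)]
  have habove : countAbove (S.erase x) x = countAbove S x := by
    rw [countAbove, countAbove, filter_erase, erase_eq_of_notMem (by simp)]
  rw [hbelow, habove, card_erase_of_mem hx] at h
  have := card_pos.2 ⟨x, hx⟩
  omega

theorem exists_countBelow_eq_succ (h : 0 < countBelow S x) :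
    ∃ s ∈ S, s < x ∧ countBelow S x = countBelow S s + 1 := by
  have hne : ({s ∈ S | s < x} : Finset α).Nonempty := card_pos.1 h
  obtain ⟨hs, hsx⟩ := mem_filter.1 (max'_mem _ hne)
  set s := max' _ hne
  refine ⟨s, hs, hsx, le_antisymm ?_ (countBelow_lt_countBelow hs hsx)⟩
  refine (card_le_card fun t ht => ?_).trans (card_insert_le s _)
  rcases (le_max' _ t ht).lt_or_eq with hts | hts
  · exact mem_insert_of_mem (mem_filter.2 ⟨(mem_filter.1 ht).1, hts⟩)
  · exact hts ▸ mem_insert_self _ _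

-- `countAbove` in `α` is, definitionally, `countBelow` in the order dual `αᵒᵈ`.
theorem exists_countAbove_eq_succ (h : 0 < countAbove S x) :
    ∃ s ∈ S, x < s ∧ countAbove S x = countAbove S s + 1 :=
  exists_countBelow_eq_succ (α := αᵒᵈ) h

theorem add_le_countBelow_of_modEq {δ : ℕ} (hδ : δ ≤ 1)
    (h : ∀ b ∈ B, countBelow C b ≡ countBelow B b + δ [MOD 2]) (hx : x ∈ B) :
    countBelow B x + δ ≤ countBelow C x := by
  induction hj : countBelow B x generalizing x with
  | zero =>
    have := h x hx
    rw [Nat.ModEq] at this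
    omega
  | succ j ih =>
    obtain ⟨b, hb, hbx, hcount⟩ := exists_countBelow_eq_succ (S := B) (x := x) (by omega)
    have hprev := ih hb (by omega)
    have hmono := countBelow_mono C hbx.le
    have := h x hx
    rw [Nat.ModEq] at this
    omega

theorem add_le_countAbove_of_modEq {δ : ℕ} (hδ : δ ≤ 1)
    (h : ∀ b ∈ B, countAbove C b ≡ countAbove B b + δ [MOD 2]) (hx : x ∈ B) :
    countAbove B x + δ ≤ countAbove C x :=
  add_le_countBelow_of_modEq (α := αᵒᵈ) hδ h hx

theorem countBelow_eq_countBelow_of_countBelow_eq_succ (hBC : Disjoint B C)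
    (hcard : #C ≤ #B + 1) (h : ∀ b ∈ B, countBelow C b = countBelow B b + 1) (hx : x ∈ C) :
    countBelow B x = countBelow C x := by
  have hxB : x ∉ B := disjoint_right.1 hBC hx
  apply le_antisymm
  · rcases Nat.eq_zero_or_pos (countBelow B x) with h0 | hpos
    · omega
    obtain ⟨b, hb, hbx, hcount⟩ := exists_countBelow_eq_succ hpos
    have := countBelow_mono C hbx.le
    have := h b hb
    omega
  · have hsumC := countBelow_add_countAbove_of_mem hx
    have hsumB := countBelow_add_countAbove_of_notMem hxB
    rcases Nat.eq_zero_or_pos (countAbove B x) with h0 | hpos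
    · omega
    obtain ⟨b, hb, hxb, hcount⟩ := exists_countAbove_eq_succ hpos
    have := countBelow_add_countAbove_of_mem hb
    have := countBelow_lt_countBelow hx hxb
    have := h b hb
    omega

theorem card_eq_and_countBelow_eq_of_modEq (hB : B.Nonempty) (hAB : Disjoint A B)
    (hBC : Disjoint B C) (hbelow : ∀ b ∈ B, countBelow A b = countBelow B b)
    (hAcard : #A ≤ #B) (hBcard : #B ≤ #A + 1) (hCcard : #C ≤ #A + 1)
    (hCpar : #C ≡ #A + 1 [MOD 2]) (hpar : ∀ b ∈ B, countAbove C b ≡ countAbove A b [MOD 2]) :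
    #C = #A + 1 ∧ ∀ c ∈ C, countBelow B c = countBelow C c := by
  have hsum : ∀ b ∈ B, countBelow A b + countAbove A b = #A ∧
      countBelow B b + countAbove B b + 1 = #B ∧ countBelow C b + countAbove C b = #C :=
    fun b hb => ⟨countBelow_add_countAbove_of_notMem (disjoint_right.1 hAB hb),
      countBelow_add_countAbove_of_mem hb,
      countBelow_add_countAbove_of_notMem (disjoint_left.1 hBC hb)⟩
  have hlow : ∀ b ∈ B, countBelow B b + 1 ≤ countBelow C b := by
    refine fun b => add_le_countBelow_of_modEq le_rfl fun b hb => ?_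
    have := hsum b hb; have := hbelow b hb; have := hpar b hb
    rw [Nat.ModEq] at *
    omega
  have hhigh : ∀ b ∈ B, countAbove B b + (#A + 1 - #B) ≤ countAbove C b := by
    refine fun b => add_le_countAbove_of_modEq (by omega) fun b hb => ?_
    have := hsum b hb; have := hbelow b hb; have := hpar b hb
    rw [Nat.ModEq] at *
    omega
  obtain ⟨b₀, hb₀⟩ := hB
  have hC : #C = #A + 1 := by
    have := hsum b₀ hb₀; have := hlow b₀ hb₀; have := hhigh b₀ hb₀
    omega
  refine ⟨hC, fun c => countBelow_eq_countBelow_of_countBelow_eq_succ hBC (by omega) fun b hb => ?_⟩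
  have := hsum b hb; have := hlow b hb; have := hhigh b hb
  omega

def Separates (A C : Finset α) : Prop :=
  ∀ c ∈ C, ∀ c' ∈ C, c < c' → ∃ a ∈ A, c < a ∧ a < c'

theorem Separates.card_le_card_add_one (h : Separates A C) : #C ≤ #A + 1 := by
  classical
  induction C using Finset.induction_on_max generalizing A with
  | empty => simp
  | insert c s hlt ih =>
    rcases s.eq_empty_or_nonempty with rfl | hs
    · simp
    have hmax := s.max'_mem hs
    obtain ⟨a, ha, hma, -⟩ := h _ (mem_insert_of_mem hmax) c (mem_insert_self c s) (hlt _ hmax)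
    have hsep : Separates (A.erase a) s := fun x hx y hy hxy => by
      obtain ⟨a', ha', hxa', ha'y⟩ := h x (mem_insert_of_mem hx) y (mem_insert_of_mem hy) hxy
      exact ⟨a', mem_erase.2 ⟨((ha'y.trans_le (s.le_max' y hy)).trans hma).ne, ha'⟩, hxa', ha'y⟩
    have := ih hsep
    rw [card_erase_of_mem ha] at this
    rw [card_insert_of_notMem fun hc => (hlt c hc).false]
    have := card_pos.2 ⟨a, ha⟩
    omega

theorem Separates.dual (h : Separates A C) : Separates (α := αᵒᵈ) A C :=
  fun c hc c' hc' hcc' => (h c' hc' c hc hcc').imp fun _ ⟨ha, h₁, h₂⟩ => ⟨ha, h₂, h₁⟩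

theorem card_eq_of_separates_of_modEq {Z : ℕ → Finset α} (h0 : Z 0 = ∅) (h1 : #(Z 1) = 1)
    (hsep : ∀ n, Separates (Z n) (Z (n + 2)))
    (hcard : ∀ n, #(Z (n + 2)) ≡ #(Z n) + 1 [MOD 2])
    (hdisj : ∀ n, Disjoint (Z n) (Z (n + 1)))
    (hpar : ∀ n, ∀ b ∈ Z (n + 1), countAbove (Z (n + 2)) b ≡ countAbove (Z n) b [MOD 2])
    (n : ℕ) : #(Z n) = (n + 1) / 2 := by
  -- The third conjunct says that `Z n` and `Z (n + 1)` alternate, starting with `Z (n + 1)`.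
  suffices ∀ n, #(Z n) = (n + 1) / 2 ∧ #(Z (n + 1)) = (n + 2) / 2 ∧
      ∀ b ∈ Z (n + 1), countBelow (Z n) b = countBelow (Z (n + 1)) b from (this n).1
  intro n
  induction n with
  | zero =>
    obtain ⟨a, ha⟩ := card_eq_one.1 h1
    refine ⟨by simp [h0], h1, fun b hb => ?_⟩
    rw [ha, mem_singleton] at hb
    simp [countBelow, h0, ha, hb, filter_singleton]
  | succ n ih =>
    obtain ⟨hA, hB, hAB⟩ := ih
    obtain ⟨hC, hBC⟩ := card_eq_and_countBelow_eq_of_modEq (card_pos.1 (by omega)) (hdisj n)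
      (hdisj (n + 1)) hAB (by omega) (by omega) ((hsep n).card_le_card_add_one.trans (by omega))
      (hcard n) (hpar n)
    exact ⟨hB, by omega, hBC⟩

end LinearOrder

section ConditionallyCompleteLinearOrder

variable {α : Type*} [ConditionallyCompleteLinearOrder α] {A C : Finset α}

theorem Separates.csInf_lt_csInf (h : Separates A C) (hAC : #A < #C) (hA : A.Nonempty) :
    sInf (C : Set α) < sInf (A : Set α) := by
  have hC : C.Nonempty := card_pos.1 (by omega)
  rw [hA.csInf_eq_min', hC.csInf_eq_min']
  by_contra! hle
  have hsep : Separates (A.erase (A.min' hA)) C := fun c hc c' hc' hcc' => by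
    obtain ⟨a, ha, hca, hac'⟩ := h c hc c' hc' hcc'
    exact ⟨a, mem_erase.2 ⟨(hle.trans_lt ((C.min'_le c hc).trans_lt hca)).ne', ha⟩, hca, hac'⟩
  have := hsep.card_le_card_add_one
  rw [card_erase_of_mem (A.min'_mem hA)] at this
  have := hA.card_pos
  omega

theorem Separates.csSup_lt_csSup (h : Separates A C) (hAC : #A < #C) (hA : A.Nonempty) :
    sSup (A : Set α) < sSup (C : Set α) :=
  h.dual.csInf_lt_csInf hAC hA

end ConditionallyCompleteLinearOrder

theorem prod_sub_eq_neg_one_pow_countAbove_mul {R : Type*} [CommRing R] [LinearOrder R]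
    [IsStrictOrderedRing R] (S : Finset R) (x : R) :
    ∏ a ∈ S, (x - a) = (-1) ^ countAbove S x * ∏ a ∈ S, |x - a| := by
  calc ∏ a ∈ S, (x - a) = ∏ a ∈ S, ((if x < a then -1 else 1) * |x - a|) := by
        refine prod_congr rfl fun a _ => ?_
        split_ifs with hxa
        · rw [abs_of_neg (sub_neg.2 hxa)]; ring
        · rw [abs_of_nonneg (sub_nonneg.2 (not_lt.1 hxa)), one_mul]
    _ = _ := by rw [prod_mul_distrib, prod_ite, prod_const, prod_const_one, mul_one, countAbove]

end Finset

open Finset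

namespace Polynomial

theorem nodup_roots_of_eval_derivative_ne_zero {R : Type*} [CommRing R] [IsDomain R] {P : R[X]}
    (h : ∀ x, P.eval x = 0 → (derivative P).eval x ≠ 0) : P.roots.Nodup := by
  classical
  refine Multiset.nodup_iff_count_le_one.2 fun a => ?_
  by_contra! hlt
  have hP : P ≠ 0 := by rintro rfl; simp at hlt
  rw [count_roots, one_lt_rootMultiplicity_iff_isRoot hP] at hlt
  exact h a hlt.1 hlt.2

theorem eval_pos_of_leadingCoeff_pos {q : ℝ[X]} (h : ∀ x, q.eval x ≠ 0) (hq : 0 < q.leadingCoeff)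
    (x : ℝ) : 0 < q.eval x := by
  obtain ⟨y, hy⟩ : ∃ y, 0 < q.eval y := by
    rcases Nat.eq_zero_or_pos q.natDegree with hdeg | hdeg
    · rw [eq_C_of_natDegree_eq_zero hdeg] at hq ⊢
      exact ⟨0, by simpa using hq⟩
    · exact ((q.tendsto_atTop_of_leadingCoeff_nonneg (natDegree_pos_iff_degree_pos.1 hdeg)
        hq.le).eventually_gt_atTop 0).exists
  by_contra! hx
  obtain ⟨z, hz⟩ := intermediate_value_univ x y q.continuous ⟨hx, hy.le⟩
  exact h z hz

theorem leadingCoeff_mul_eval_pos {q : ℝ[X]} (h : ∀ x, q.eval x ≠ 0) (x : ℝ) :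
    0 < q.leadingCoeff * q.eval x := by
  have hq : q.leadingCoeff ≠ 0 := leadingCoeff_ne_zero.2 fun h0 => h 0 (by simp [h0])
  simpa using eval_pos_of_leadingCoeff_pos (q := C q.leadingCoeff * q)
    (fun y => by simpa using ⟨leadingCoeff_ne_zero.1 hq, h y⟩) (by simpa using mul_self_pos.2 hq) x

theorem even_natDegree_of_eval_ne_zero {q : ℝ[X]} (h : ∀ x, q.eval x ≠ 0) : Even q.natDegree := by
  by_contra hodd
  have hlc : (q.comp (-X)).leadingCoeff = -q.leadingCoeff := by
    rw [leadingCoeff_comp (by simp), leadingCoeff_neg, leadingCoeff_X,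
      (Nat.not_even_iff_odd.1 hodd).neg_one_pow, mul_neg_one]
  have h₁ := leadingCoeff_mul_eval_pos h 0
  have h₂ := leadingCoeff_mul_eval_pos (q := q.comp (-X)) (fun x => by simpa using h (-x)) 0
  rw [hlc] at h₂
  simp only [eval_comp, eval_neg, eval_X, neg_zero] at h₂
  linarith

theorem exists_eval_eq_prod_roots_toFinset_mul {P : ℝ[X]} (hP : P ≠ 0) (hnd : P.roots.Nodup) :
    ∃ q : ℝ[X], (∀ x, q.eval x ≠ 0) ∧ q.leadingCoeff = P.leadingCoeff ∧
      #P.roots.toFinset + q.natDegree = P.natDegree ∧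
      ∀ x, P.eval x = (∏ a ∈ P.roots.toFinset, (x - a)) * q.eval x := by
  obtain ⟨q, hPq, hdeg, hq⟩ := P.exists_prod_multiset_X_sub_C_mul
  have hq0 : q ≠ 0 := by rintro rfl; exact hP (by simpa using hPq.symm)
  have hmonic : (P.roots.map fun a => X - C a).prod.Monic :=
    monic_multiset_prod_of_monic _ _ fun a _ => monic_X_sub_C a
  refine ⟨q, fun x hx => by simpa [hq] using (mem_roots hq0).2 hx, ?_, ?_, fun x => ?_⟩
  · rw [← hPq, leadingCoeff_mul, hmonic.leadingCoeff, one_mul]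
  · rwa [Multiset.toFinset_card_of_nodup hnd]
  · conv_lhs => rw [← hPq]
    rw [eval_mul, eval_multiset_prod, Multiset.map_map, prod_eq_multiset_prod,
      Multiset.toFinset_val, hnd.dedup]
    simp

theorem eval_eq_neg_one_pow_countAbove_mul_abs {P : ℝ[X]} (hP : 0 < P.leadingCoeff)
    (hnd : P.roots.Nodup) (x : ℝ) :
    P.eval x = (-1) ^ countAbove P.roots.toFinset x * |P.eval x| := by
  obtain ⟨q, hq, hlc, -, heval⟩ :=
    exists_eval_eq_prod_roots_toFinset_mul (leadingCoeff_ne_zero.1 hP.ne') hnd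
  have hqx : 0 < q.eval x := pos_of_mul_pos_right (leadingCoeff_mul_eval_pos hq x) (hlc ▸ hP.le)
  rw [heval, abs_mul, abs_of_pos hqx, abs_prod, prod_sub_eq_neg_one_pow_countAbove_mul, mul_assoc]

theorem card_roots_toFinset_modEq_natDegree {P : ℝ[X]} (hnd : P.roots.Nodup) :
    #P.roots.toFinset ≡ P.natDegree [MOD 2] := by
  rcases eq_or_ne P 0 with rfl | hP
  · simp [Nat.ModEq]
  obtain ⟨q, hq, -, hdeg, -⟩ := exists_eval_eq_prod_roots_toFinset_mul hP hnd
  obtain ⟨k, hk⟩ := even_natDegree_of_eval_ne_zero hq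
  rw [Nat.ModEq]
  omega

theorem countAbove_roots_modEq_of_eval_mul_eval_pos {P R : ℝ[X]} (hP : 0 < P.leadingCoeff)
    (hR : 0 < R.leadingCoeff) (hPn : P.roots.Nodup) (hRn : R.roots.Nodup) {x : ℝ}
    (h : 0 < P.eval x * R.eval x) :
    countAbove P.roots.toFinset x ≡ countAbove R.roots.toFinset x [MOD 2] := by
  rw [eval_eq_neg_one_pow_countAbove_mul_abs hP hPn, eval_eq_neg_one_pow_countAbove_mul_abs hR hRn]
    at h
  have habs := mul_nonneg (abs_nonneg (P.eval x)) (abs_nonneg (R.eval x))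
  rcases Nat.even_or_odd (countAbove P.roots.toFinset x) with hm | hm <;>
    rcases Nat.even_or_odd (countAbove R.roots.toFinset x) with hk | hk <;>
    simp only [hm.neg_one_pow, hk.neg_one_pow] at h
  · exact (Nat.even_iff.1 hm).trans (Nat.even_iff.1 hk).symm
  · nlinarith
  · nlinarith
  · exact (Nat.odd_iff.1 hm).trans (Nat.odd_iff.1 hk).symm

theorem eval_mul_eval_pos_of_eval_eq_zero {P₀ P₁ P₂ : ℝ[X]}
    (hrec : P₂ * P₀ = X * P₁ ^ 2 - 4 * (P₁ * derivative (derivative P₁) - derivative P₁ ^ 2))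
    {b : ℝ} (hb : P₁.eval b = 0) (hb' : (derivative P₁).eval b ≠ 0) :
    0 < P₂.eval b * P₀.eval b := by
  have h := congrArg (eval b) hrec
  simp only [eval_mul, eval_sub, eval_pow, eval_X, eval_ofNat, hb] at h
  rw [h]
  have := pow_pos (abs_pos.2 hb') 2
  rw [sq_abs] at this
  linarith

end Polynomial

theorem triangle_add_two_modEq (n : ℕ) :
    (n + 2) * (n + 2 + 1) / 2 ≡ n * (n + 1) / 2 + 1 [MOD 2] := by
  have e : (n + 2) * (n + 2 + 1) = n * (n + 1) + 2 * (2 * n + 3) := by ring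
  rw [e, Nat.add_mul_div_left _ _ two_pos, Nat.ModEq]
  omega

theorem number_of_real_roots_yablonskii_vorobev_general (Q : ℕ → Polynomial ℝ)
    (hQ0 : Q 0 = 1) (hQ1 : Q 1 = X)
    (hrec : ∀ n, Q (n + 2) * Q n =
      X * (Q (n + 1)) ^ 2 -
        4 * (Q (n + 1) * derivative (derivative (Q (n + 1))) - (derivative (Q (n + 1))) ^ 2))
    (hmonic : ∀ n, (Q n).Monic ∧ (Q n).natDegree = n * (n + 1) / 2)
    (hsimple : ∀ n, ∀ x : ℝ, (Q n).eval x = 0 → (derivative (Q n)).eval x ≠ 0)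
    (hnocommon1 : ∀ n, ∀ x : ℝ, ¬((Q n).eval x = 0 ∧ (Q (n + 1)).eval x = 0))
    (hinter2 : ∀ n, ∀ a ∈ realRoots (Q (n + 2)), ∀ b ∈ realRoots (Q (n + 2)), a < b →
      ∃ c ∈ realRoots (Q n), a < c ∧ c < b)
    : (∀ n : ℕ, (realRoots (Q n)).ncard = (n + 1) / 2) ∧
      (∀ n : ℕ, 2 ≤ n →
        sInf (realRoots (Q (n - 1))) > sInf (realRoots (Q (n + 1))) ∧
        sSup (realRoots (Q (n - 1))) < sSup (realRoots (Q (n + 1)))) := by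
  have hlc n : 0 < (Q n).leadingCoeff := (hmonic n).1.leadingCoeff ▸ one_pos
  have hnd n : (Q n).roots.Nodup := nodup_roots_of_eval_derivative_ne_zero (hsimple n)
  set Z : ℕ → Finset ℝ := fun n => (Q n).roots.toFinset
  have hmem n x : x ∈ Z n ↔ (Q n).eval x = 0 := by simp [Z, mem_roots (hmonic n).1.ne_zero]
  have hZ n : realRoots (Q n) = Z n := Set.ext fun x => (hmem n x).symm
  have hsep n : Separates (Z n) (Z (n + 2)) := by
    simpa only [Separates, ← Finset.mem_coe, ← hZ] using hinter2 n
  have hcardpar n : #(Z (n + 2)) ≡ #(Z n) + 1 [MOD 2] := by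
    have h₀ := card_roots_toFinset_modEq_natDegree (hnd n)
    have h₂ := card_roots_toFinset_modEq_natDegree (hnd (n + 2))
    rw [(hmonic _).2] at h₀ h₂
    exact h₂.trans ((triangle_add_two_modEq n).trans (h₀.symm.add_right 1))
  have hdisj n : Disjoint (Z n) (Z (n + 1)) :=
    disjoint_left.2 fun x h h' => hnocommon1 n x ⟨(hmem _ _).1 h, (hmem _ _).1 h'⟩
  have hpar n : ∀ b ∈ Z (n + 1), countAbove (Z (n + 2)) b ≡ countAbove (Z n) b [MOD 2] :=
    fun b hb => countAbove_roots_modEq_of_eval_mul_eval_pos (hlc _) (hlc _) (hnd _) (hnd _)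
      (eval_mul_eval_pos_of_eval_eq_zero (hrec n) ((hmem _ _).1 hb) (hsimple _ _ ((hmem _ _).1 hb)))
  have hcard := card_eq_of_separates_of_modEq (by simp [Z, hQ0]) (by simp [Z, hQ1]) hsep hcardpar
    hdisj hpar
  refine ⟨fun n => by rw [hZ, Set.ncard_coe_finset, hcard], fun n hn => ?_⟩
  obtain ⟨m, rfl⟩ : ∃ m, n = m + 1 := ⟨n - 1, by omega⟩
  have hlt : #(Z m) < #(Z (m + 2)) := by rw [hcard, hcard]; omega
  have hne : (Z m).Nonempty := card_pos.1 (by rw [hcard]; omega)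
  rw [Nat.add_sub_cancel, hZ, hZ]
  exact ⟨(hsep m).csInf_lt_csInf hlt hne, (hsep m).csSup_lt_csSup hlt hne⟩

theorem number_of_real_roots_yablonskii_vorobev (Q : ℕ → Polynomial ℝ)
    (hQ0 : Q 0 = 1) (hQ1 : Q 1 = X)
    (hrec : ∀ n, Q (n + 2) * Q n =
      X * (Q (n + 1)) ^ 2 -
        4 * (Q (n + 1) * derivative (derivative (Q (n + 1))) - (derivative (Q (n + 1))) ^ 2))
    (hmonic : ∀ n, (Q n).Monic ∧ (Q n).natDegree = n * (n + 1) / 2)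
    (hsimple : ∀ n, ∀ x : ℝ, (Q n).eval x = 0 → (derivative (Q n)).eval x ≠ 0)
    (hnocommon1 : ∀ n, ∀ x : ℝ, ¬((Q n).eval x = 0 ∧ (Q (n + 1)).eval x = 0))
    (hnocommon2 : ∀ n, ∀ x : ℝ, ¬((Q n).eval x = 0 ∧ (Q (n + 2)).eval x = 0))
    (hinter1 : ∀ n, ∀ a ∈ realRoots (Q n), ∀ b ∈ realRoots (Q n), a < b →
      ∃ c ∈ realRoots (Q (n + 2)), a < c ∧ c < b)
    (hinter2 : ∀ n, ∀ a ∈ realRoots (Q (n + 2)), ∀ b ∈ realRoots (Q (n + 2)), a < b →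
      ∃ c ∈ realRoots (Q n), a < c ∧ c < b)
    : (∀ n : ℕ, (realRoots (Q n)).ncard = (n + 1) / 2) ∧
      (∀ n : ℕ, 2 ≤ n →
        sInf (realRoots (Q (n - 1))) > sInf (realRoots (Q (n + 1))) ∧
        sSup (realRoots (Q (n - 1))) < sSup (realRoots (Q (n + 1)))) :=
  number_of_real_roots_yablonskii_vorobev_general Q hQ0 hQ1 hrec hmonic hsimple hnocommon1 hinter2
end

section
/- For every n ∈ ℕ, the number of negative real roots of the n-th Yablonskii–Vorob'ev polynomial Q_n equals ⌊(n+1)/3⌋. -/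
open Polynomial

/-!
The real roots of `Q n` and `Q (n + 2)` interlace, `Q (n + 2)` having one more root at each end.
Hence, passing from `Q n` to `Q (n + 2)`, the number of negative roots grows by `0` or `1`, and
the position of `0` decides which: by `1` if `Q n (0) = 0`, by `0` if `Q (n + 2) (0) = 0`.
Otherwise `Q n (0)` and `Q (n + 2) (0)` have the same sign, and for a monic polynomial with simple
real roots the sign at `0` is `(-1) ^ #(positive roots)`, so the positive counts agree in parity
and the extra root must be negative. Induction from `Q 0 = 1`, `Q 1 = z`, `Q 2 = z ^ 3 + 4`.
-/

open Set

section LinearOrder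

variable {α : Type*} [LinearOrder α]

def Separates (T D : Set α) : Prop :=
  ∀ s ∈ D, ∀ s' ∈ D, s < s' → ∃ u ∈ T, s < u ∧ u < s'

namespace Separates

variable {T D : Set α}

lemma mono_right (h : Separates T D) {D' : Set α} (hD : D' ⊆ D) : Separates T D' :=
  fun s hs s' hs' hlt => h s (hD hs) s' (hD hs') hlt

lemma inter_Iio_Iic (h : Separates T D) (t : α) : Separates (T ∩ Iio t) (D ∩ Iic t) := by
  intro s hs s' hs' hlt
  obtain ⟨u, hu, hsu, hus'⟩ := h s hs.1 s' hs'.1 hlt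
  exact ⟨u, ⟨hu, hus'.trans_le hs'.2⟩, hsu, hus'⟩

lemma ncard_le (h : Separates T D) (hT : T.Finite) (hlow : ∀ s ∈ D, ∃ u ∈ T, u < s) :
    D.ncard ≤ T.ncard := by
  have hmax : ∀ s ∈ D, ∃ u ∈ T ∩ Iio s, ∀ v ∈ T ∩ Iio s, v ≤ u := fun s hs =>
    (T ∩ Iio s).exists_max_image id (hT.inter_of_left _) (hlow s hs)
  choose! f hfT hfmax using hmax
  -- `f s` is the last point of `T` before `s`; separation makes it strictly increasing on `D`
  have hmono : StrictMonoOn f D := by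
    intro s hs s' hs' hlt
    obtain ⟨u, hu, hsu, hus'⟩ := h s hs s' hs' hlt
    exact (hfT s hs).2.trans (hsu.trans_le (hfmax s' hs' u ⟨hu, hus'⟩))
  exact ncard_le_ncard_of_injOn f (fun s hs => (hfT s hs).1) hmono.injOn hT

lemma ncard_le_add_one (h : Separates T D) (hT : T.Finite) : D.ncard ≤ T.ncard + 1 := by
  rcases D.finite_or_infinite with hD | hD
  · rcases D.eq_empty_or_nonempty with rfl | hne
    · simp
    obtain ⟨m, hm, hmin⟩ := D.exists_min_image id hD hne
    have hle : (D \ {m}).ncard ≤ T.ncard := by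
      refine (h.mono_right sdiff_subset).ncard_le hT fun s hs => ?_
      obtain ⟨u, hu, -, hus⟩ := h m hm s hs.1 ((hmin s hs.1).lt_of_ne (Ne.symm hs.2))
      exact ⟨u, hu, hus⟩
    rw [← ncard_sdiff_singleton_add_one hm hD]
    omega
  · simp [hD.ncard]

end Separates

lemma ncard_inter_Iic_of_mem {s : Set α} {t : α} (hs : s.Finite) (ht : t ∈ s) :
    (s ∩ Iic t).ncard = (s ∩ Iio t).ncard + 1 := by
  rw [← Iio_insert, inter_insert_of_mem ht]
  exact ncard_insert_of_notMem (fun h => lt_irrefl t h.2) (hs.inter_of_left _)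

lemma ncard_inter_Iio_le_ncard_inter_Iic {s : Set α} (hs : s.Finite) (t : α) :
    (s ∩ Iio t).ncard ≤ (s ∩ Iic t).ncard :=
  ncard_le_ncard (inter_subset_inter_right _ Iio_subset_Iic_self) (hs.inter_of_left _)

lemma ncard_inter_Iio_add_ncard_inter_Ioi {s : Set α} {t : α} (hs : s.Finite) (ht : t ∉ s) :
    (s ∩ Iio t).ncard + (s ∩ Ioi t).ncard = s.ncard := by
  rw [← ncard_union_eq (Iio_disjoint_Ioi_same.mono inter_subset_right inter_subset_right)
    (hs.inter_of_left _) (hs.inter_of_left _), ← inter_union_distrib_left, Iio_union_Ioi,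
    ← sdiff_eq, sdiff_singleton_eq_self ht]

/-- The points of `A` and `C` alternate as `c₀ < a₁ < c₁ < ⋯ < aₖ < cₖ`. -/
structure Interlaced (A C : Set α) : Prop where
  separates_left : Separates C A
  separates_right : Separates A C
  exists_lt : ∃ c ∈ C, ∀ a ∈ A, c < a
  exists_gt : ∃ c ∈ C, ∀ a ∈ A, a < c

namespace Interlaced

variable {A C : Set α}

lemma ncard_eq_add_one (hI : Interlaced A C) (hA : A.Finite) (hC : C.Finite) :
    C.ncard = A.ncard + 1 := by
  obtain ⟨c₀, hc₀, hlt⟩ := hI.exists_lt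
  obtain ⟨c₁, hc₁, hgt⟩ := hI.exists_gt
  have hsep : Separates (C \ {c₁}) A := by
    intro a ha a' ha' haa'
    obtain ⟨u, hu, hau, hua'⟩ := hI.separates_left a ha a' ha' haa'
    exact ⟨u, ⟨hu, (hua'.trans (hgt a' ha')).ne⟩, hau, hua'⟩
  have hle : A.ncard ≤ (C \ {c₁}).ncard :=
    hsep.ncard_le hC.sdiff fun a ha => ⟨c₀, ⟨hc₀, ((hlt a ha).trans (hgt a ha)).ne⟩, hlt a ha⟩
  have := ncard_sdiff_singleton_add_one hc₁ hC
  have := hI.separates_right.ncard_le_add_one hA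
  omega

lemma ncard_inter_Iic_le (hI : Interlaced A C) (hC : C.Finite) (t : α) :
    (A ∩ Iic t).ncard ≤ (C ∩ Iio t).ncard := by
  obtain ⟨c, hc, hlt⟩ := hI.exists_lt
  exact (hI.separates_left.inter_Iio_Iic t).ncard_le (hC.inter_of_left _) fun a ha =>
    ⟨c, ⟨hc, (hlt a ha.1).trans_le ha.2⟩, hlt a ha.1⟩

lemma ncard_inter_Iic_le_add_one (hI : Interlaced A C) (hA : A.Finite) (t : α) :
    (C ∩ Iic t).ncard ≤ (A ∩ Iio t).ncard + 1 :=
  (hI.separates_right.inter_Iio_Iic t).ncard_le_add_one (hA.inter_of_left _)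

lemma ncard_inter_Iio_of_mem_left (hI : Interlaced A C) (hA : A.Finite) (hC : C.Finite)
    {t : α} (ht : t ∈ A) : (C ∩ Iio t).ncard = (A ∩ Iio t).ncard + 1 := by
  have := hI.ncard_inter_Iic_le hC t
  have := hI.ncard_inter_Iic_le_add_one hA t
  have := ncard_inter_Iic_of_mem hA ht
  have := ncard_inter_Iio_le_ncard_inter_Iic hC t
  omega

lemma ncard_inter_Iio_of_mem_right (hI : Interlaced A C) (hA : A.Finite) (hC : C.Finite)
    {t : α} (ht : t ∈ C) : (C ∩ Iio t).ncard = (A ∩ Iio t).ncard := by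
  have := hI.ncard_inter_Iic_le hC t
  have := hI.ncard_inter_Iic_le_add_one hA t
  have := ncard_inter_Iic_of_mem hC ht
  have := ncard_inter_Iio_le_ncard_inter_Iic hA t
  omega

/-- Off `A ∪ C` the counts below `t` differ by `0` or `1`; since `C` has one point more than
`A`, the parity of the counts above `t` decides which. -/
lemma ncard_inter_Iio_of_even (hI : Interlaced A C) (hA : A.Finite) (hC : C.Finite) {t : α}
    (htA : t ∉ A) (htC : t ∉ C) (heven : Even ((A ∩ Ioi t).ncard + (C ∩ Ioi t).ncard)) :
    (C ∩ Iio t).ncard = (A ∩ Iio t).ncard + 1 := by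
  rw [Nat.even_iff] at heven
  have := hI.ncard_eq_add_one hA hC
  have := ncard_inter_Iio_add_ncard_inter_Ioi hA htA
  have := ncard_inter_Iio_add_ncard_inter_Ioi hC htC
  have := hI.ncard_inter_Iic_le hC t
  have := hI.ncard_inter_Iic_le_add_one hA t
  have := ncard_inter_Iio_le_ncard_inter_Iic hA t
  have := ncard_inter_Iio_le_ncard_inter_Iic hC t
  omega

end Interlaced

end LinearOrder

/-- In `ℝ`, `sInf ∅ = sSup ∅ = 0`, so the hypotheses also rule out `C = ∅`. -/
lemma interlaced_of_sInf_lt_of_lt_sSup {A C : Set ℝ} (hA : A.Finite) (hC : C.Finite)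
    (hCA : Separates C A) (hAC : Separates A C) (hinf : sInf C < sInf A)
    (hsup : sSup A < sSup C) : Interlaced A C := by
  have hCne : C.Nonempty := by
    rcases C.eq_empty_or_nonempty with rfl | h
    · rcases A.eq_empty_or_nonempty with rfl | ⟨a, ha⟩
      · simp at hinf
      · simp only [Real.sInf_empty, Real.sSup_empty] at hinf hsup
        linarith [csInf_le hA.bddBelow ha, le_csSup hA.bddAbove ha]
    · exact h
  exact ⟨hCA, hAC,
    ⟨sInf C, hCne.csInf_mem hC, fun a ha => hinf.trans_le (csInf_le hA.bddBelow ha)⟩,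
    ⟨sSup C, hCne.csSup_mem hC, fun a ha => (le_csSup hA.bddAbove ha).trans_lt hsup⟩⟩

lemma realRoots_finite {P : ℝ[X]} (hP : P ≠ 0) : (realRoots P).Finite :=
  finite_setOfPred_isRoot hP

lemma nodup_roots_of_eval_derivative_ne_zero {P : ℝ[X]} (hP : P ≠ 0)
    (hs : ∀ x, P.eval x = 0 → (derivative P).eval x ≠ 0) : P.roots.Nodup := by
  classical
  refine Multiset.nodup_iff_count_le_one.2 fun x => ?_
  rw [count_roots]
  by_contra! h
  obtain ⟨hx, hx'⟩ := (one_lt_rootMultiplicity_iff_isRoot hP).1 h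
  exact hs x hx hx'

lemma ncard_realRoots_inter_Ioi {P : ℝ[X]} (hP : P ≠ 0) (hnodup : P.roots.Nodup) :
    (realRoots P ∩ Ioi 0).ncard = Multiset.card (P.roots.filter (0 < ·)) := by
  classical
  have : realRoots P ∩ Ioi 0 = ↑(P.roots.filter (0 < ·)).toFinset := by
    ext x
    simp [realRoots, mem_roots hP]
  rw [this, ncard_coe_finset, Multiset.toFinset_card_of_nodup (hnodup.filter _)]

lemma Polynomial.Monic.eval_pos_of_forall_eval_ne_zero {q : ℝ[X]} (hq : q.Monic)
    (hroot : ∀ x, q.eval x ≠ 0) (x : ℝ) : 0 < q.eval x := by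
  by_contra! hx
  obtain ⟨y, hxy, hy⟩ : ∃ y, x ≤ y ∧ 0 ≤ q.eval y := by
    rcases Nat.eq_zero_or_pos q.natDegree with hd | hd
    · exact ⟨x, le_rfl, by simp [hq.natDegree_eq_zero.1 hd]⟩
    · have htop : Filter.Tendsto q.eval Filter.atTop Filter.atTop :=
        tendsto_atTop_of_leadingCoeff_nonneg q (natDegree_pos_iff_degree_pos.1 hd)
          (by simp [hq.leadingCoeff])
      exact ((Filter.eventually_ge_atTop x).and (htop.eventually_ge_atTop 0)).exists
  obtain ⟨z, -, hz⟩ := intermediate_value_Icc hxy q.continuous.continuousOn ⟨hx, hy⟩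
  exact hroot z hz

lemma Multiset.neg_one_pow_card_filter_pos_mul_prod_neg_pos (m : Multiset ℝ) (hm : (0 : ℝ) ∉ m) :
    0 < (-1) ^ card (m.filter (0 < ·)) * (m.map (- ·)).prod := by
  induction m using Multiset.induction_on with
  | empty => simp
  | cons a m ih =>
    have ha : a ≠ 0 := fun h => hm (h ▸ mem_cons_self a m)
    have ih := ih fun h => hm (mem_cons_of_mem h)
    rcases ha.lt_or_gt with ha | ha
    · rw [filter_cons_of_neg _ ha.not_gt, map_cons, prod_cons, mul_left_comm]
      exact mul_pos (neg_pos.2 ha) ih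
    · rw [filter_cons_of_pos _ ha, card_cons, map_cons, prod_cons, pow_succ]
      nlinarith

/-- Splitting off the real linear factors, `P = ∏ (X - a) * q` with `q` monic and root-free,
so `P(0) = ∏ (-a) * q(0)` with `q(0) > 0`. -/
lemma Polynomial.Monic.neg_one_pow_mul_eval_zero_pos {P : ℝ[X]} (hP : P.Monic)
    (h0 : P.eval 0 ≠ 0) : 0 < (-1) ^ Multiset.card (P.roots.filter (0 < ·)) * P.eval 0 := by
  obtain ⟨q, hPq, -, hq⟩ := exists_prod_multiset_X_sub_C_mul P
  have hprod : ((P.roots.map fun a => X - C a).prod).Monic :=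
    monic_multiset_prod_of_monic _ _ fun a _ => monic_X_sub_C a
  have hqmonic : q.Monic := hprod.of_mul_monic_left (by rwa [hPq])
  have hq0 : 0 < q.eval 0 := hqmonic.eval_pos_of_forall_eval_ne_zero (fun x hx => by
    simpa [hq] using (mem_roots hqmonic.ne_zero).2 hx) 0
  have heval : P.eval 0 = (P.roots.map (- ·)).prod * q.eval 0 := by
    conv_lhs => rw [← hPq]
    simp [eval_multiset_prod, Multiset.map_map]
  have hroots : (0 : ℝ) ∉ P.roots := fun h => h0 ((mem_roots hP.ne_zero).1 h)
  rw [heval, ← mul_assoc]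
  exact mul_pos (Multiset.neg_one_pow_card_filter_pos_mul_prod_neg_pos _ hroots) hq0

lemma neg_one_pow_ncard_mul_eval_zero_pos {P : ℝ[X]} (hP : P.Monic)
    (hs : ∀ x, P.eval x = 0 → (derivative P).eval x ≠ 0) (h0 : P.eval 0 ≠ 0) :
    0 < (-1) ^ (realRoots P ∩ Ioi 0).ncard * P.eval 0 := by
  rw [ncard_realRoots_inter_Ioi hP.ne_zero (nodup_roots_of_eval_derivative_ne_zero hP.ne_zero hs)]
  exact hP.neg_one_pow_mul_eval_zero_pos h0

lemma even_ncard_realRoots_inter_Ioi_add {P R : ℝ[X]} (hP : P.Monic) (hR : R.Monic)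
    (hPs : ∀ x, P.eval x = 0 → (derivative P).eval x ≠ 0)
    (hRs : ∀ x, R.eval x = 0 → (derivative R).eval x ≠ 0) (h : 0 < P.eval 0 * R.eval 0) :
    Even ((realRoots P ∩ Ioi 0).ncard + (realRoots R ∩ Ioi 0).ncard) := by
  have hP0 := neg_one_pow_ncard_mul_eval_zero_pos hP hPs (left_ne_zero_of_mul h.ne')
  have hR0 := neg_one_pow_ncard_mul_eval_zero_pos hR hRs (right_ne_zero_of_mul h.ne')
  by_contra hodd
  rw [Nat.not_even_iff_odd] at hodd
  have := mul_pos hP0 hR0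
  rw [show ∀ a b x y : ℝ, a * x * (b * y) = a * b * (x * y) from fun _ _ _ _ => by ring,
    ← pow_add, hodd.neg_one_pow] at this
  linarith

lemma eq_X_pow_three_add_four_of_rec {Q : ℕ → ℝ[X]} (hQ0 : Q 0 = 1) (hQ1 : Q 1 = X)
    (hrec : Q 2 * Q 0 =
      X * Q 1 ^ 2 - 4 * (Q 1 * derivative (derivative (Q 1)) - derivative (Q 1) ^ 2)) :
    Q 2 = X ^ 3 + 4 := by
  rw [hQ0, hQ1, derivative_X, derivative_one, mul_one] at hrec
  rw [hrec]
  ring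

lemma ncard_realRoots_X_pow_three_add_four_inter_Iio :
    (realRoots (X ^ 3 + 4) ∩ Iio 0).ncard = 1 := by
  set c : ℝ := -(4 : ℝ) ^ (3⁻¹ : ℝ)
  have hc : c ^ 3 = -4 := by
    rw [Odd.neg_pow (by decide), ← Real.rpow_natCast, ← Real.rpow_mul (by norm_num)]
    norm_num
  have hc0 : c < 0 := neg_lt_zero.2 (by positivity)
  refine ncard_eq_one.2 ⟨c, ?_⟩
  ext x
  simp only [realRoots, mem_inter_iff, mem_ofPred_eq, eval_add, eval_pow, eval_X, eval_ofNat,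
    mem_Iio, mem_singleton_iff]
  constructor
  · rintro ⟨hx, -⟩
    exact (Odd.strictMono_pow (R := ℝ) (n := 3) (by decide)).injective (by linarith)
  · rintro rfl
    exact ⟨by linarith, hc0⟩

theorem number_of_negative_real_roots_general (Q : ℕ → Polynomial ℝ)
    (hQ0 : Q 0 = 1) (hQ1 : Q 1 = X)
    (hrec : ∀ n, Q (n + 2) * Q n =
      X * (Q (n + 1)) ^ 2 -
        4 * (Q (n + 1) * derivative (derivative (Q (n + 1))) - (derivative (Q (n + 1))) ^ 2))
    (hmonic : ∀ n, (Q n).Monic ∧ (Q n).natDegree = n * (n + 1) / 2)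
    (hsimple : ∀ n, ∀ x : ℝ, (Q n).eval x = 0 → (derivative (Q n)).eval x ≠ 0)
    (hinter1 : ∀ n, ∀ a ∈ realRoots (Q n), ∀ b ∈ realRoots (Q n), a < b →
      ∃ c ∈ realRoots (Q (n + 2)), a < c ∧ c < b)
    (hinter2 : ∀ n, ∀ a ∈ realRoots (Q (n + 2)), ∀ b ∈ realRoots (Q (n + 2)), a < b →
      ∃ c ∈ realRoots (Q n), a < c ∧ c < b)
    (hminmax : ∀ n : ℕ, 2 ≤ n →
      sInf (realRoots (Q (n - 1))) > sInf (realRoots (Q (n + 1))) ∧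
      sSup (realRoots (Q (n - 1))) < sSup (realRoots (Q (n + 1))))
    (hsign : ∀ n : ℕ,
      ((n % 12 = 3 ∨ n % 12 = 5 ∨ n % 12 = 6 ∨ n % 12 = 8) → (Q n).eval 0 < 0) ∧
      ((n % 12 = 1 ∨ n % 12 = 4 ∨ n % 12 = 7 ∨ n % 12 = 10) → (Q n).eval 0 = 0) ∧
      ((n % 12 = 0 ∨ n % 12 = 2 ∨ n % 12 = 9 ∨ n % 12 = 11) → 0 < (Q n).eval 0))
    : ∀ n : ℕ, (realRoots (Q n) ∩ Set.Iio 0).ncard = (n + 1) / 3 := by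
  have hfin n : (realRoots (Q n)).Finite := realRoots_finite (hmonic n).1.ne_zero
  have hI n (hn : 1 ≤ n) : Interlaced (realRoots (Q n)) (realRoots (Q (n + 2))) :=
    interlaced_of_sInf_lt_of_lt_sSup (hfin n) (hfin _) (hinter1 n) (hinter2 n)
      (hminmax (n + 1) (by omega)).1 (hminmax (n + 1) (by omega)).2
  have hsame n (hn : n % 3 = 0) : 0 < (Q n).eval 0 * (Q (n + 2)).eval 0 := by
    obtain h | h : (n % 12 = 0 ∨ n % 12 = 9) ∨ (n % 12 = 3 ∨ n % 12 = 6) := by omega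
    · exact mul_pos ((hsign n).2.2 (by omega)) ((hsign (n + 2)).2.2 (by omega))
    · exact mul_pos_of_neg_of_neg ((hsign n).1 (by omega)) ((hsign (n + 2)).1 (by omega))
  have hstep n (hn : 1 ≤ n) (ih : (realRoots (Q n) ∩ Iio 0).ncard = (n + 1) / 3) :
      (realRoots (Q (n + 2)) ∩ Iio 0).ncard = (n + 3) / 3 := by
    obtain h | h | h : n % 3 = 0 ∨ n % 3 = 1 ∨ n % 3 = 2 := by omega
    · have h0 := hsame n h
      rw [(hI n hn).ncard_inter_Iio_of_even (hfin _) (hfin _) (left_ne_zero_of_mul h0.ne')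
        (right_ne_zero_of_mul h0.ne') (even_ncard_realRoots_inter_Ioi_add (hmonic _).1
          (hmonic _).1 (hsimple _) (hsimple _) h0), ih]
      omega
    · rw [(hI n hn).ncard_inter_Iio_of_mem_left (hfin _) (hfin _) ((hsign n).2.1 (by omega)), ih]
      omega
    · rw [(hI n hn).ncard_inter_Iio_of_mem_right (hfin _) (hfin _)
        ((hsign (n + 2)).2.1 (by omega)), ih]
      omega
  intro n
  induction n using Nat.strong_induction_on with
  | _ n ih =>
    match n, ih with
    | 0, _ => simp [realRoots, hQ0]
    | 1, _ => simp [realRoots, hQ1]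
    | 2, _ => rw [eq_X_pow_three_add_four_of_rec hQ0 hQ1 (hrec 0),
        ncard_realRoots_X_pow_three_add_four_inter_Iio]
    | k + 3, ih => exact hstep (k + 1) (by omega) (ih (k + 1) (by omega))

theorem number_of_negative_real_roots (Q : ℕ → Polynomial ℝ)
    (hQ0 : Q 0 = 1) (hQ1 : Q 1 = X)
    (hrec : ∀ n, Q (n + 2) * Q n =
      X * (Q (n + 1)) ^ 2 -
        4 * (Q (n + 1) * derivative (derivative (Q (n + 1))) - (derivative (Q (n + 1))) ^ 2))
    (hmonic : ∀ n, (Q n).Monic ∧ (Q n).natDegree = n * (n + 1) / 2)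
    (hsimple : ∀ n, ∀ x : ℝ, (Q n).eval x = 0 → (derivative (Q n)).eval x ≠ 0)
    (hnocommon1 : ∀ n, ∀ x : ℝ, ¬((Q n).eval x = 0 ∧ (Q (n + 1)).eval x = 0))
    (hnocommon2 : ∀ n, ∀ x : ℝ, ¬((Q n).eval x = 0 ∧ (Q (n + 2)).eval x = 0))
    (hinter1 : ∀ n, ∀ a ∈ realRoots (Q n), ∀ b ∈ realRoots (Q n), a < b →
      ∃ c ∈ realRoots (Q (n + 2)), a < c ∧ c < b)
    (hinter2 : ∀ n, ∀ a ∈ realRoots (Q (n + 2)), ∀ b ∈ realRoots (Q (n + 2)), a < b →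
      ∃ c ∈ realRoots (Q n), a < c ∧ c < b)
    (hminmax : ∀ n : ℕ, 2 ≤ n →
      sInf (realRoots (Q (n - 1))) > sInf (realRoots (Q (n + 1))) ∧
      sSup (realRoots (Q (n - 1))) < sSup (realRoots (Q (n + 1))))
    (hsign : ∀ n : ℕ,
      ((n % 12 = 3 ∨ n % 12 = 5 ∨ n % 12 = 6 ∨ n % 12 = 8) → (Q n).eval 0 < 0) ∧
      ((n % 12 = 1 ∨ n % 12 = 4 ∨ n % 12 = 7 ∨ n % 12 = 10) → (Q n).eval 0 = 0) ∧
      ((n % 12 = 0 ∨ n % 12 = 2 ∨ n % 12 = 9 ∨ n % 12 = 11) → 0 < (Q n).eval 0))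
    : ∀ n : ℕ, (realRoots (Q n) ∩ Set.Iio 0).ncard = (n + 1) / 3 :=
  number_of_negative_real_roots_general Q hQ0 hQ1 hrec hmonic hsimple hinter1 hinter2 hminmax hsign
end
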